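/- Let γ : ℝ → E be a twice differentiable unit-speed magnetic curve with charge q (γ''(t) = -q·φ(γ'(t)) and ‖γ'(t)‖ = 1 for all t), and let cos θ_α denote the constant value of γ'_{2n+α}. Then the first curvature of γ is the constant κ₁ = ‖γ''(t)‖ = |q|·√(1 - Σ_{α=1}^{s} cos²θ_α) for all t ∈ ℝ. -/

import Mathlib

open scoped RealInnerProductSpace

/-- The structure tensor `φ` of the standard `C`-manifold structure on `ℝ^{2n+s}`:
`(φv)_i = v_{n+i}`, `(φv)_{n+i} = -v_i` for `0 ≤ i < n`, and `(φv)_{2n+α} = 0`. -/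
noncomputable def phi (n s : ℕ) (v : EuclideanSpace ℝ (Fin (2*n+s))) :
    EuclideanSpace ℝ (Fin (2*n+s)) := WithLp.toLp 2 (fun k =>
  if _h1 : (k : ℕ) < n then v ⟨n + (k : ℕ), by omega⟩
  else if _h2 : (k : ℕ) < 2*n then -v ⟨(k : ℕ) - n, by omega⟩
  else 0)

/-- The index `2n+α` of the characteristic direction `ξ_α = e_{2n+α}`. -/
def idxA (n s : ℕ) (α : Fin s) : Fin (2*n+s) := ⟨2*n + (α : ℕ), by omega⟩

/-- The index `i` for `1 ≤ i ≤ n` (0-based). -/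
def idxI (n s : ℕ) (i : Fin n) : Fin (2*n+s) := ⟨(i : ℕ), by omega⟩

/-- The index `n+i` for `1 ≤ i ≤ n` (0-based). -/
def idxNI (n s : ℕ) (i : Fin n) : Fin (2*n+s) := ⟨n + (i : ℕ), by omega⟩

/-! `φ` swaps the two `n`-blocks of coordinates up to a sign and kills the last `s` coordinates,
so `‖φ v‖² = ‖v‖² - Σ_α v_{2n+α}²`. The magnetic equation gives `‖γ''‖ = |q| ‖φ γ'‖`, and with
`‖γ'‖ = 1`, `γ'_{2n+α} = cos θ_α` this is the claimed constant. -/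

theorem Fin.sum_two_mul_add {M : Type*} [AddCommMonoid M] (n s : ℕ) (f : Fin (2*n+s) → M) :
    ∑ k, f k = ∑ i, f (idxI n s i) + ∑ i, f (idxNI n s i) + ∑ α, f (idxA n s α) := by
  rw [← Fin.sum_congr' f (show n + n + s = 2*n + s by ring), Fin.sum_univ_add, Fin.sum_univ_add]
  refine congrArg₂ (· + ·) (congrArg₂ (· + ·) ?_ ?_) ?_ <;>
    exact Finset.sum_congr rfl fun i _ =>
      congrArg f (Fin.ext (by simp [idxI, idxNI, idxA, two_mul, add_comm]))

section phi

variable (n s : ℕ) (v : EuclideanSpace ℝ (Fin (2*n+s)))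

@[simp]
theorem phi_idxI (i : Fin n) : phi n s v (idxI n s i) = v (idxNI n s i) := by
  simp [phi, idxI, idxNI]

@[simp]
theorem phi_idxNI (i : Fin n) : phi n s v (idxNI n s i) = -v (idxI n s i) := by
  simp [phi, idxI, idxNI, show n + (i : ℕ) < 2 * n by omega]

@[simp]
theorem phi_idxA (α : Fin s) : phi n s v (idxA n s α) = 0 := by
  simp [phi, idxA, show ¬ 2 * n + (α : ℕ) < n by omega]

theorem norm_phi_sq : ‖phi n s v‖ ^ 2 = ‖v‖ ^ 2 - ∑ α, v (idxA n s α) ^ 2 := by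
  simp only [EuclideanSpace.real_norm_sq_eq, Fin.sum_two_mul_add (f := fun k => phi n s v k ^ 2),
    Fin.sum_two_mul_add (f := fun k => v k ^ 2), phi_idxI, phi_idxNI, phi_idxA, neg_sq,
    zero_pow two_ne_zero, Finset.sum_const_zero]
  ring

theorem norm_phi : ‖phi n s v‖ = √(‖v‖ ^ 2 - ∑ α, v (idxA n s α) ^ 2) := by
  rw [← norm_phi_sq, Real.sqrt_sq (norm_nonneg _)]

end phi

theorem normal_magnetic_curve_first_curvature_general
    (n s : ℕ) (q : ℝ)
    (γ : ℝ → EuclideanSpace ℝ (Fin (2*n+s)))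
    (hmag : ∀ t : ℝ, deriv (deriv γ) t = (-q) • phi n s (deriv γ t))
    (hunit : ∀ t : ℝ, ‖deriv γ t‖ = 1)
    (θ : Fin s → ℝ)
    (hslant : ∀ t : ℝ, ∀ α : Fin s, deriv γ t (idxA n s α) = Real.cos (θ α)) :
    ∀ t : ℝ, ‖deriv (deriv γ) t‖ =
      |q| * Real.sqrt (1 - ∑ α : Fin s, Real.cos (θ α) ^ 2) := by
  intro t
  simp only [hmag t, norm_smul, norm_neg, Real.norm_eq_abs, norm_phi, hunit t, hslant t, one_pow]

/-- First curvature of a normal magnetic curve in the standard `C`-manifold `ℝ^{2n+s}`: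
`κ₁ = ‖γ''‖ = |q|·√(1 - Σ_α cos²θ_α)`. -/
theorem normal_magnetic_curve_first_curvature
    (n s : ℕ) (hn : 0 < n) (hs : 0 < s) (q : ℝ)
    (γ : ℝ → EuclideanSpace ℝ (Fin (2*n+s)))
    (hγ : Differentiable ℝ γ) (hγ' : Differentiable ℝ (deriv γ))
    (hmag : ∀ t : ℝ, deriv (deriv γ) t = (-q) • phi n s (deriv γ t))
    (hunit : ∀ t : ℝ, ‖deriv γ t‖ = 1)
    (θ : Fin s → ℝ)
    (hslant : ∀ t : ℝ, ∀ α : Fin s, deriv γ t (idxA n s α) = Real.cos (θ α)) :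
    ∀ t : ℝ, ‖deriv (deriv γ) t‖ =
      |q| * Real.sqrt (1 - ∑ α : Fin s, Real.cos (θ α) ^ 2) :=
  normal_magnetic_curve_first_curvature_general n s q γ hmag hunit θ hslant
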